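/- The unique θ ∈ ℝ^q satisfying the projected Bellman fixed-point equation Φθ = Π(R + γ·P·Φθ) is given explicitly by θ* = −(Φᵀ D (γP − I) Φ)⁻¹ Φᵀ D R. -/

import Mathlib

/-!
Jensen's inequality for the rows of the stochastic matrix `P`, together with stationarity of `d`,
makes `P` non-expansive for the norm `‖y‖_D² = ∑ d s * y s ²`; hence
`⟨y, (γP - I) y⟩_D ≤ (γ - 1) ‖y‖_D² < 0` for `y ≠ 0`. Since `Φ` is injective, `Φᵀ D (γP - I) Φ` is
negative definite and `Φᵀ D Φ` positive definite, so both are invertible, and the projected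
fixed-point equation reduces to the linear system `Φᵀ D (γP - I) Φ θ = -Φᵀ D R`.
-/

open Matrix

theorem Matrix.mulVec_injective_of_rank_eq_card {K m n : Type*} [Field K] [Fintype n]
    {A : Matrix m n K} (hA : A.rank = Fintype.card n) : Function.Injective A.mulVec := by
  have hker : Module.finrank K (LinearMap.ker A.mulVecLin) = 0 := by
    have := A.mulVecLin.finrank_range_add_finrank_ker
    rw [Module.finrank_fintype_fun_eq_card] at this
    change A.rank + _ = _ at this
    omega
  exact LinearMap.ker_eq_bot.mp (Submodule.finrank_eq_zero.mp hker)

theorem Matrix.isUnit_of_dotProduct_mulVec_ne_zero {K n : Type*} [Field K] [Fintype n]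
    [DecidableEq n] {A : Matrix n n K} (hA : ∀ x, x ≠ 0 → x ⬝ᵥ A *ᵥ x ≠ 0) : IsUnit A := by
  refine mulVec_injective_iff_isUnit.mp fun x y hxy => ?_
  by_contra hne
  apply hA (x - y) (sub_ne_zero.mpr hne)
  rw [mulVec_sub, hxy, sub_self, dotProduct_zero]

theorem Matrix.dotProduct_transpose_mul_mul_mulVec {R m n : Type*} [CommSemiring R] [Fintype m]
    [Fintype n] (Φ : Matrix m n R) (B : Matrix m m R) (x : n → R) :
    x ⬝ᵥ (Φᵀ * B * Φ) *ᵥ x = (Φ *ᵥ x) ⬝ᵥ B *ᵥ (Φ *ᵥ x) := by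
  rw [← mulVec_mulVec, ← mulVec_mulVec, dotProduct_mulVec, vecMul_transpose]

theorem Matrix.eq_nonsing_inv_mulVec_iff {R n : Type*} [CommRing R] [Fintype n] [DecidableEq n]
    {A : Matrix n n R} (hA : IsUnit A) {x u : n → R} : x = A⁻¹ *ᵥ u ↔ A *ᵥ x = u := by
  have hdet := (isUnit_iff_isUnit_det A).mp hA
  constructor
  · rintro rfl
    rw [mulVec_mulVec, mul_nonsing_inv _ hdet, one_mulVec]
  · rintro rfl
    rw [mulVec_mulVec, nonsing_inv_mul _ hdet, one_mulVec]

theorem Matrix.dotProduct_diagonal_mulVec {R n : Type*} [CommSemiring R] [Fintype n]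
    [DecidableEq n] (d y z : n → R) : y ⬝ᵥ diagonal d *ᵥ z = d ⬝ᵥ (y * z) := by
  simp only [dotProduct, mulVec_diagonal, Pi.mul_apply]
  exact Finset.sum_congr rfl fun _ _ => by ring

section Stochastic

variable {S : Type*} [Fintype S] {P : Matrix S S ℝ}

theorem sq_mulVec_le_mulVec_sq (hP0 : ∀ i j, 0 ≤ P i j) (hP1 : ∀ i, ∑ j, P i j = 1)
    (y : S → ℝ) (i : S) : (P *ᵥ y) i ^ 2 ≤ (P *ᵥ y ^ 2) i := by
  simpa only [mulVec, dotProduct, Pi.pow_apply, smul_eq_mul] using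
    even_two.convexOn_pow.map_sum_le (fun j _ => hP0 i j) (hP1 i) (fun j _ => Set.mem_univ (y j))

theorem dotProduct_mulVec_sq_le (hP0 : ∀ i j, 0 ≤ P i j) (hP1 : ∀ i, ∑ j, P i j = 1)
    {d : S → ℝ} (hd : 0 ≤ d) (hstat : d ᵥ* P = d) (y : S → ℝ) :
    d ⬝ᵥ (P *ᵥ y) ^ 2 ≤ d ⬝ᵥ y ^ 2 :=
  calc d ⬝ᵥ (P *ᵥ y) ^ 2 ≤ d ⬝ᵥ P *ᵥ y ^ 2 :=
        Finset.sum_le_sum fun s _ =>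
          mul_le_mul_of_nonneg_left (sq_mulVec_le_mulVec_sq hP0 hP1 y s) (hd s)
    _ = d ⬝ᵥ y ^ 2 := by rw [dotProduct_mulVec, hstat]

theorem dotProduct_mul_mulVec_le (hP0 : ∀ i j, 0 ≤ P i j) (hP1 : ∀ i, ∑ j, P i j = 1)
    {d : S → ℝ} (hd : 0 ≤ d) (hstat : d ᵥ* P = d) (y : S → ℝ) :
    d ⬝ᵥ (y * P *ᵥ y) ≤ d ⬝ᵥ y ^ 2 := by
  have hamgm : 2 * d ⬝ᵥ (y * P *ᵥ y) ≤ d ⬝ᵥ y ^ 2 + d ⬝ᵥ (P *ᵥ y) ^ 2 := by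
    simp only [dotProduct, Finset.mul_sum, ← Finset.sum_add_distrib]
    refine Finset.sum_le_sum fun s _ => ?_
    have := mul_le_mul_of_nonneg_left (two_mul_le_add_sq (y s) ((P *ᵥ y) s)) (hd s)
    simp only [Pi.mul_apply, Pi.pow_apply]
    linarith
  linarith [dotProduct_mulVec_sq_le hP0 hP1 hd hstat y]

theorem dotProduct_diagonal_mul_smul_sub_one_mulVec_neg [DecidableEq S]
    (hP0 : ∀ i j, 0 ≤ P i j) (hP1 : ∀ i, ∑ j, P i j = 1)
    {d : S → ℝ} (hd : ∀ s, 0 < d s) (hstat : d ᵥ* P = d) {γ : ℝ} (hγ0 : 0 ≤ γ) (hγ1 : γ < 1)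
    {y : S → ℝ} (hy : y ≠ 0) : y ⬝ᵥ (diagonal d * (γ • P - 1)) *ᵥ y < 0 := by
  have hnorm : 0 < d ⬝ᵥ y ^ 2 := by
    simpa only [sq, star_trivial, dotProduct_diagonal_mulVec] using
      (PosDef.diagonal hd).dotProduct_mulVec_pos hy
  have hcontr : d ⬝ᵥ (y * P *ᵥ y) ≤ d ⬝ᵥ y ^ 2 :=
    dotProduct_mul_mulVec_le hP0 hP1 (fun s => (hd s).le) hstat y
  have hform : y ⬝ᵥ (diagonal d * (γ • P - 1)) *ᵥ y = γ * d ⬝ᵥ (y * P *ᵥ y) - d ⬝ᵥ y ^ 2 := by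
    rw [← mulVec_mulVec, dotProduct_diagonal_mulVec, sub_mulVec, one_mulVec, smul_mulVec,
      mul_sub, mul_smul_comm, dotProduct_sub, dotProduct_smul, smul_eq_mul, sq]
  rw [hform]
  nlinarith [mul_le_mul_of_nonneg_left hcontr hγ0]

end Stochastic

theorem projected_fixed_point_iff {K S n : Type*} [Field K] [Fintype S] [DecidableEq S]
    [Fintype n] [DecidableEq n] {Φ : Matrix S n K} (hΦ : Function.Injective Φ.mulVec)
    {W : Matrix n S K} (hM : IsUnit (W * Φ)) {T : Matrix S S K} (hA : IsUnit (W * (T - 1) * Φ))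
    (R : S → K) (θ : n → K) :
    Φ *ᵥ θ = (Φ * (W * Φ)⁻¹ * W) *ᵥ (R + T *ᵥ (Φ *ᵥ θ)) ↔
      θ = -((W * (T - 1) * Φ)⁻¹ *ᵥ (W *ᵥ R)) := by
  rw [← mulVec_mulVec, ← mulVec_mulVec, hΦ.eq_iff, eq_nonsing_inv_mulVec_iff hM,
    ← mulVec_neg, eq_nonsing_inv_mulVec_iff hA, mulVec_add]
  simp only [mulVec_mulVec, Matrix.mul_sub, Matrix.sub_mul, Matrix.mul_one, sub_mulVec,
    Matrix.mul_assoc]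
  constructor <;> intro h <;> linear_combination -h

theorem stmt_6_general {S : Type*} [Fintype S] [DecidableEq S]
    (q : ℕ)
    (P : Matrix S S ℝ)
    (hP0 : ∀ i j, 0 ≤ P i j) (hP1 : ∀ i, ∑ j, P i j = 1)
    (d : S → ℝ) (hd : ∀ s, 0 < d s)
    (hstat : ∀ s', ∑ s, d s * P s s' = d s')
    (γ : ℝ) (hγ0 : 0 < γ) (hγ1 : γ < 1) (R : S → ℝ)
    (Φ : Matrix S (Fin q) ℝ) (hΦ : Φ.rank = q)
    (Proj : Matrix S S ℝ)
    (hProj : Proj = Φ * (Φᵀ * Matrix.diagonal d * Φ)⁻¹ * Φᵀ * Matrix.diagonal d) :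
    ∀ θ : Fin q → ℝ,
      Φ *ᵥ θ = Proj *ᵥ (R + γ • (P *ᵥ (Φ *ᵥ θ))) ↔
      θ = -((Φᵀ * Matrix.diagonal d * (γ • P - 1) * Φ)⁻¹ *ᵥ
              ((Φᵀ * Matrix.diagonal d) *ᵥ R)) := by
  intro θ
  have hinj : Function.Injective Φ.mulVec :=
    mulVec_injective_of_rank_eq_card (by rw [hΦ, Fintype.card_fin])
  have hM : IsUnit (Φᵀ * diagonal d * Φ) := by
    simpa only [conjTranspose_eq_transpose_of_trivial] using
      ((PosDef.diagonal hd).conjTranspose_mul_mul_same hinj).isUnit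
  have hA : IsUnit (Φᵀ * diagonal d * (γ • P - 1) * Φ) := by
    refine isUnit_of_dotProduct_mulVec_ne_zero fun θ hθ => ?_
    rw [Matrix.mul_assoc Φᵀ, dotProduct_transpose_mul_mul_mulVec]
    exact (dotProduct_diagonal_mul_smul_sub_one_mulVec_neg hP0 hP1 hd (funext hstat) hγ0.le hγ1
      fun h => hθ (hinj (by rw [h, mulVec_zero]))).ne
  rw [hProj, ← smul_mulVec, Matrix.mul_assoc _ Φᵀ]
  exact projected_fixed_point_iff hinj hM hA R θ

/-- The unique `θ` satisfying the projected Bellman fixed-point equation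
`Φθ = Π (R + γ P Φ θ)` is `θ* = −(Φᵀ D (γP − I) Φ)⁻¹ Φᵀ D R`. -/
theorem stmt_6 {S : Type*} [Fintype S] [DecidableEq S] [Nonempty S]
    (q : ℕ) (hq : 0 < q)
    (P : Matrix S S ℝ)
    (hP0 : ∀ i j, 0 ≤ P i j) (hP1 : ∀ i, ∑ j, P i j = 1)
    (d : S → ℝ) (hd : ∀ s, 0 < d s)
    (hstat : ∀ s', ∑ s, d s * P s s' = d s')
    (γ : ℝ) (hγ0 : 0 < γ) (hγ1 : γ < 1) (R : S → ℝ)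
    (Φ : Matrix S (Fin q) ℝ) (hΦ : Φ.rank = q)
    (Proj : Matrix S S ℝ)
    (hProj : Proj = Φ * (Φᵀ * Matrix.diagonal d * Φ)⁻¹ * Φᵀ * Matrix.diagonal d) :
    ∀ θ : Fin q → ℝ,
      Φ *ᵥ θ = Proj *ᵥ (R + γ • (P *ᵥ (Φ *ᵥ θ))) ↔
      θ = -((Φᵀ * Matrix.diagonal d * (γ • P - 1) * Φ)⁻¹ *ᵥ
              ((Φᵀ * Matrix.diagonal d) *ᵥ R)) :=
  stmt_6_general q P hP0 hP1 d hd hstat γ hγ0 hγ1 R Φ hΦ Proj hProj
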